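/- arXiv:math-ph/0503048 — 3 statements merged into one kernel-verified Lean document; each statement's English description precedes it below -/
import Mathlib

section
/- Let A be an n×n complex matrix, C an m×m complex matrix, and B an n×m complex matrix, and suppose the block matrix M = fromBlocks A B Bᴴ C is positive semidefinite. Then det M, det A and det C are nonnegative real numbers and det M ≤ det A · det C (Fischer's inequality). -/
open Matrix
open scoped ComplexOrder

namespace Matrix

variable {𝕜 m n : Type*} [RCLike 𝕜]

lemma PosSemidef.of_fromBlocks₁₁ {A : Matrix m m 𝕜} {B : Matrix m n 𝕜} {C : Matrix n n 𝕜}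
    (hM : (fromBlocks A B Bᴴ C).PosSemidef) : A.PosSemidef :=
  hM.submatrix Sum.inl

lemma PosSemidef.of_fromBlocks₂₂ {A : Matrix m m 𝕜} {B : Matrix m n 𝕜} {C : Matrix n n 𝕜}
    (hM : (fromBlocks A B Bᴴ C).PosSemidef) : C.PosSemidef :=
  hM.submatrix Sum.inr

variable [Fintype n] [DecidableEq n]

lemma IsHermitian.eigenvalues_le_one {T : Matrix n n 𝕜} (hT : T.IsHermitian)
    (h : (1 - T).PosSemidef) (i : n) : hT.eigenvalues i ≤ 1 := by
  have hmem : 1 - (hT.eigenvalues i : 𝕜) ∈ spectrum 𝕜 (1 - T) := by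
    rw [← map_one (algebraMap 𝕜 (Matrix n n 𝕜)), ← spectrum.singleton_sub_eq]
    exact Set.sub_mem_sub rfl (hT.spectrum_eq_image_range ▸ ⟨_, ⟨i, rfl⟩, rfl⟩)
  exact_mod_cast sub_nonneg.1 ((posSemidef_iff_isHermitian_and_spectrum_nonneg.1 h).2 hmem)

lemma PosSemidef.det_le_one {T : Matrix n n 𝕜} (hT : T.PosSemidef) (h : (1 - T).PosSemidef) :
    T.det ≤ 1 := by
  rw [hT.isHermitian.det_eq_prod_eigenvalues, ← RCLike.ofReal_prod, ← RCLike.ofReal_one,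
    RCLike.ofReal_le_ofReal]
  exact Finset.prod_le_one (fun i _ ↦ hT.eigenvalues_nonneg i)
    fun i _ ↦ hT.isHermitian.eigenvalues_le_one h i

open scoped MatrixOrder in
/-- Writing `Y = Rᴴ R`, congruence by `R⁻¹` reduces this to `0 ≤ T ≤ 1 → det T ≤ 1`. -/
lemma PosSemidef.det_le_det {X Y : Matrix n n 𝕜} (hX : X.PosSemidef) (hXY : (Y - X).PosSemidef) :
    X.det ≤ Y.det := by
  have hY : Y.PosSemidef := by simpa using hXY.add hX
  by_cases hX0 : X.det = 0
  · exact hX0 ▸ hY.det_nonneg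
  have hYpd : Y.PosDef := by
    simpa using (hX.posDef_iff_det_ne_zero.2 hX0).add_posSemidef hXY
  obtain ⟨R, hR, rfl⟩ :=
    CStarAlgebra.isStrictlyPositive_iff_eq_star_mul_self.mp hYpd.isStrictlyPositive
  obtain ⟨S, hRS, hSR⟩ : ∃ S, R * S = 1 ∧ S * R = 1 :=
    ⟨_, hR.mul_val_inv, hR.val_inv_mul⟩
  rw [star_eq_conjTranspose] at hXY ⊢
  set T := Sᴴ * X * S
  have hT : T.PosSemidef := hX.conjTranspose_mul_mul_same S
  have h1T : (1 - T).PosSemidef := by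
    have := hXY.conjTranspose_mul_mul_same S
    rwa [Matrix.mul_sub, Matrix.sub_mul, ← Matrix.mul_assoc, ← conjTranspose_mul,
      Matrix.mul_assoc, hRS, conjTranspose_one, Matrix.one_mul] at this
  have hXT : X = Rᴴ * T * R := by
    simp only [T, Matrix.mul_assoc, hSR, Matrix.mul_one]
    rw [← Matrix.mul_assoc, ← conjTranspose_mul, hSR, conjTranspose_one, Matrix.one_mul]
  calc X.det = T.det * (Rᴴ * R).det := by
        conv_lhs => rw [hXT]
        simp only [det_mul]
        ring
    _ ≤ 1 * (Rᴴ * R).det := by gcongr; exacts [hY.det_nonneg, hT.det_le_one h1T]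
    _ = (Rᴴ * R).det := one_mul _

/-- If `M` is singular the bound is trivial; otherwise `A` is invertible, `det M = det A · det S`
for the Schur complement `S = C - Bᴴ A⁻¹ B`, and `0 ≤ S ≤ C`. -/
lemma PosSemidef.det_fromBlocks_le_det_mul_det [Fintype m] [DecidableEq m]
    {A : Matrix m m 𝕜} {B : Matrix m n 𝕜} {C : Matrix n n 𝕜} (hM : (fromBlocks A B Bᴴ C).PosSemidef) :
    (fromBlocks A B Bᴴ C).det ≤ A.det * C.det := by
  have hA := hM.of_fromBlocks₁₁
  by_cases hM0 : (fromBlocks A B Bᴴ C).det = 0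
  · exact hM0 ▸ mul_nonneg hA.det_nonneg hM.of_fromBlocks₂₂.det_nonneg
  have hApd : A.PosDef := (hM.posDef_iff_det_ne_zero.2 hM0).submatrix Sum.inl_injective
  have := hApd.isUnit.invertible
  have hS : (C - Bᴴ * A⁻¹ * B).PosSemidef := (PosDef.fromBlocks₁₁ B C hApd).1 hM
  have hBAB : (Bᴴ * A⁻¹ * B).PosSemidef := hApd.inv.posSemidef.conjTranspose_mul_mul_same B
  rw [det_fromBlocks₁₁, invOf_eq_nonsing_inv]
  exact mul_le_mul_of_nonneg_left (hS.det_le_det (by simpa using hBAB)) hA.det_nonneg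

end Matrix

/-- **Fischer's inequality**: if the block matrix `fromBlocks A B Bᴴ C` is positive
semidefinite, then its determinant, `det A` and `det C` are nonnegative (real) and
`det M ≤ det A * det C`. -/
theorem fischer_inequality {n m : ℕ}
    (A : Matrix (Fin n) (Fin n) ℂ) (B : Matrix (Fin n) (Fin m) ℂ)
    (C : Matrix (Fin m) (Fin m) ℂ)
    (hM : (Matrix.fromBlocks A B Bᴴ C).PosSemidef) :
    0 ≤ (Matrix.fromBlocks A B Bᴴ C).det ∧ 0 ≤ A.det ∧ 0 ≤ C.det ∧
      (Matrix.fromBlocks A B Bᴴ C).det ≤ A.det * C.det :=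
  ⟨hM.det_nonneg, hM.of_fromBlocks₁₁.det_nonneg, hM.of_fromBlocks₂₂.det_nonneg,
    hM.det_fromBlocks_le_det_mul_det⟩
end

section
/- Let T = fromBlocks A B Bᴴ C be a Hermitian positive definite (n+m)×(n+m) complex matrix with blocks A (n×n), B (n×m), C (m×m). Then T and A are invertible, and the (1,1) block (T⁻¹)₁₁ of the inverse T⁻¹ satisfies (T⁻¹)₁₁ − A⁻¹ is positive semidefinite, i.e. A⁻¹ ≤ (T⁻¹)₁₁ in the Loewner order. -/
/-!
By the Schur-complement formula for the inverse of a block matrix,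
`(T⁻¹)₁₁ = A⁻¹ + A⁻¹ B S⁻¹ Bᴴ A⁻¹` with `S = C - Bᴴ A⁻¹ B`. Since `S` is positive semidefinite,
so is `S⁻¹`, and the difference `(T⁻¹)₁₁ - A⁻¹` is the congruence `X S⁻¹ Xᴴ` with `X = A⁻¹ B`.
-/

open Matrix
open scoped ComplexOrder

namespace Matrix

variable {l m α : Type*}

theorem PosDef.toBlocks₁₁ [Ring α] [PartialOrder α] [StarRing α]
    {M : Matrix (l ⊕ m) (l ⊕ m) α} (hM : M.PosDef) : M.toBlocks₁₁.PosDef :=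
  hM.submatrix Sum.inl_injective

theorem toBlocks₁₁_inv_fromBlocks [Fintype l] [Fintype m] [DecidableEq l] [DecidableEq m]
    [CommRing α] {A : Matrix l l α} (B : Matrix l m α) (C : Matrix m l α) (D : Matrix m m α)
    (hA : IsUnit A) (hM : IsUnit (fromBlocks A B C D)) :
    (fromBlocks A B C D)⁻¹.toBlocks₁₁ = A⁻¹ + A⁻¹ * B * (D - C * A⁻¹ * B)⁻¹ * C * A⁻¹ := by
  let := hA.invertible
  let := hM.invertible
  let := invertibleOfFromBlocks₁₁Invertible A B C D
  rw [← invOf_eq_nonsing_inv (fromBlocks A B C D), invOf_fromBlocks₁₁_eq, toBlocks_fromBlocks₁₁,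
    invOf_eq_nonsing_inv (D - C * ⅟A * B), invOf_eq_nonsing_inv A]

end Matrix

/-- If `T = fromBlocks A B Bᴴ C` is positive definite, then `T` and `A` are invertible
and the upper-left block of `T⁻¹` dominates `A⁻¹` in the Loewner order:
`(T⁻¹)₁₁ - A⁻¹` is positive semidefinite. -/
theorem inv_fromBlocks_toBlocks₁₁_ge {n m : ℕ}
    (A : Matrix (Fin n) (Fin n) ℂ) (B : Matrix (Fin n) (Fin m) ℂ)
    (C : Matrix (Fin m) (Fin m) ℂ)
    (hT : (Matrix.fromBlocks A B Bᴴ C).PosDef) :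
    IsUnit (Matrix.fromBlocks A B Bᴴ C) ∧ IsUnit A ∧
      (((Matrix.fromBlocks A B Bᴴ C)⁻¹).toBlocks₁₁ - A⁻¹).PosSemidef := by
  have hA : A.PosDef := by simpa using hT.toBlocks₁₁
  refine ⟨hT.isUnit, hA.isUnit, ?_⟩
  let := hA.isUnit.invertible
  have hS : (C - Bᴴ * A⁻¹ * B).PosSemidef := (PosDef.fromBlocks₁₁ B C hA).mp hT.posSemidef
  rw [toBlocks₁₁_inv_fromBlocks B Bᴴ C hA.isUnit hT.isUnit, add_sub_cancel_left]
  simpa only [conjTranspose_mul, hA.inv.isHermitian.eq, Matrix.mul_assoc]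
    using hS.inv.mul_mul_conjTranspose_same (A⁻¹ * B)
end

section
/- Let Λ ⊂ ℝ^d be a bounded measurable set, let k : ℝ^d → ℂ be a bounded continuous function, and let G : Λ × Λ → ℂ be square integrable (G ∈ L²(Λ × Λ)). Then the function (x, y) ↦ k(x−y) + ∫_Λ k(x−u) k(u−y) du + ∫_Λ ∫_Λ k(x−u) G(u,v) k(v−y) du dv is a continuous function of (x, y) ∈ ℝ^d × ℝ^d. -/
/-!
Both integrals have the form `∫ k (x - s a) * g a * k (t a - y) dν(a)` with `g ∈ L¹(ν)`: the
single integral with `ν` Lebesgue measure on `Λ`, `s = t = id` and `g = 1`, the double one (after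
Fubini) with `ν` the product measure on `Λ × Λ`, `s, t` the projections and `g = G`, which is
integrable because `L² ⊆ L¹` on a finite measure space. Such an integrand is continuous in `(x, y)`
and dominated by `C² ‖g‖` with `C` a bound of `‖k‖`, so dominated convergence gives continuity.
-/

open MeasureTheory

lemma norm_mul_mul_le_of_norm_le {β : Type*} {k : β → ℂ} {C : ℝ} (hkb : ∀ x, ‖k x‖ ≤ C)
    (x y : β) (z : ℂ) :
    ‖k x * z * k y‖ ≤ C * C * ‖z‖ := by
  have hC : 0 ≤ C := (norm_nonneg _).trans (hkb x)
  rw [norm_mul, norm_mul]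
  calc ‖k x‖ * ‖z‖ * ‖k y‖ ≤ C * ‖z‖ * C := by gcongr <;> [exact hkb x; exact hkb y]
    _ = C * C * ‖z‖ := by ring

section KernelMulMul

variable {E α : Type*} [NormedAddCommGroup E] [MeasurableSpace E] [OpensMeasurableSpace E]
  [MeasurableSpace α] {ν : Measure α} {k : E → ℂ} {C : ℝ} {s t : α → E} {g : α → ℂ}

lemma aestronglyMeasurable_kernel_mul_mul (hk : Continuous k) (hs : Measurable s)
    (ht : Measurable t) (hg : AEStronglyMeasurable g ν) (x y : E) :
    AEStronglyMeasurable (fun a => k (x - s a) * g a * k (t a - y)) ν :=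
  (((hk.comp (continuous_const.sub continuous_id)).measurable.comp hs).aestronglyMeasurable.mul
    hg).mul ((hk.comp (continuous_id.sub continuous_const)).measurable.comp ht).aestronglyMeasurable

lemma integrable_kernel_mul_mul (hk : Continuous k) (hkb : ∀ x, ‖k x‖ ≤ C) (hs : Measurable s)
    (ht : Measurable t) (hg : Integrable g ν) (x y : E) :
    Integrable (fun a => k (x - s a) * g a * k (t a - y)) ν :=
  (hg.norm.const_mul (C * C)).mono' (aestronglyMeasurable_kernel_mul_mul hk hs ht hg.1 x y)
    (ae_of_all _ fun _ => norm_mul_mul_le_of_norm_le hkb _ _ _)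

theorem continuous_integral_kernel_mul_mul (hk : Continuous k) (hkb : ∀ x, ‖k x‖ ≤ C)
    (hs : Measurable s) (ht : Measurable t) (hg : Integrable g ν) :
    Continuous fun p : E × E => ∫ a, k (p.1 - s a) * g a * k (t a - p.2) ∂ν :=
  continuous_of_dominated (fun p => aestronglyMeasurable_kernel_mul_mul hk hs ht hg.1 p.1 p.2)
    (fun _ => ae_of_all _ fun _ => norm_mul_mul_le_of_norm_le hkb _ _ _)
    (hg.norm.const_mul (C * C))
    (ae_of_all _ fun _ => ((hk.comp (continuous_fst.sub continuous_const)).mul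
      continuous_const).mul (hk.comp (continuous_const.sub continuous_snd)))

end KernelMulMul

theorem kernel_continuous_of_L2_perturbation_general {d : ℕ}
    (Λ : Set (EuclideanSpace ℝ (Fin d)))
    (hΛb : Bornology.IsBounded Λ)
    (k : EuclideanSpace ℝ (Fin d) → ℂ)
    (hk : Continuous k) (hkb : ∃ C : ℝ, ∀ x, ‖k x‖ ≤ C)
    (G : EuclideanSpace ℝ (Fin d) → EuclideanSpace ℝ (Fin d) → ℂ)
    (hG : MemLp (fun p : EuclideanSpace ℝ (Fin d) × EuclideanSpace ℝ (Fin d) =>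
      G p.1 p.2) 2 ((volume.restrict Λ).prod (volume.restrict Λ))) :
    Continuous (fun p : EuclideanSpace ℝ (Fin d) × EuclideanSpace ℝ (Fin d) =>
      k (p.1 - p.2) + (∫ u in Λ, k (p.1 - u) * k (u - p.2)) +
        ∫ u in Λ, ∫ v in Λ, k (p.1 - u) * G u v * k (v - p.2)) := by
  obtain ⟨C, hC⟩ := hkb
  have : IsFiniteMeasure (volume.restrict Λ) := isFiniteMeasure_restrict.2 hΛb.measure_lt_top.ne
  have hGint := hG.integrable one_le_two
  have hsingle : Continuous fun p : EuclideanSpace ℝ (Fin d) × EuclideanSpace ℝ (Fin d) =>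
      ∫ u in Λ, k (p.1 - u) * k (u - p.2) := by
    simpa only [id, Pi.one_apply, mul_one] using
      continuous_integral_kernel_mul_mul hk hC measurable_id measurable_id (integrable_const (1 : ℂ))
  have hdouble : Continuous fun p : EuclideanSpace ℝ (Fin d) × EuclideanSpace ℝ (Fin d) =>
      ∫ u in Λ, ∫ v in Λ, k (p.1 - u) * G u v * k (v - p.2) :=
    (continuous_integral_kernel_mul_mul hk hC measurable_fst measurable_snd hGint).congr fun p =>
      integral_prod _ (integrable_kernel_mul_mul hk hC measurable_fst measurable_snd hGint p.1 p.2)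
  exact ((hk.comp (continuous_fst.sub continuous_snd)).add hsingle).add hdouble

/-- For a bounded measurable `Λ ⊂ ℝ^d`, a bounded continuous `k : ℝ^d → ℂ` and
`G ∈ L²(Λ × Λ)`, the kernel
`(x, y) ↦ k(x−y) + ∫_Λ k(x−u) k(u−y) du + ∫_Λ ∫_Λ k(x−u) G(u,v) k(v−y) du dv`
is continuous on `ℝ^d × ℝ^d`. -/
theorem kernel_continuous_of_L2_perturbation {d : ℕ}
    (Λ : Set (EuclideanSpace ℝ (Fin d)))
    (hΛm : MeasurableSet Λ) (hΛb : Bornology.IsBounded Λ)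
    (k : EuclideanSpace ℝ (Fin d) → ℂ)
    (hk : Continuous k) (hkb : ∃ C : ℝ, ∀ x, ‖k x‖ ≤ C)
    (G : EuclideanSpace ℝ (Fin d) → EuclideanSpace ℝ (Fin d) → ℂ)
    (hG : MemLp (fun p : EuclideanSpace ℝ (Fin d) × EuclideanSpace ℝ (Fin d) =>
      G p.1 p.2) 2 ((volume.restrict Λ).prod (volume.restrict Λ))) :
    Continuous (fun p : EuclideanSpace ℝ (Fin d) × EuclideanSpace ℝ (Fin d) =>
      k (p.1 - p.2) + (∫ u in Λ, k (p.1 - u) * k (u - p.2)) +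
        ∫ u in Λ, ∫ v in Λ, k (p.1 - u) * G u v * k (v - p.2)) :=
  kernel_continuous_of_L2_perturbation_general Λ hΛb k hk hkb G hG
end
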